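/- For d ∈ {2, 3}, there exists an integer m_d, depending only on d, such that for all n ≥ 0 the height of the history region satisfies L(H_n) ≤ m_d − 4 almost surely. -/

import Mathlib

/-!
Almost surely every perturbation lies in `[-1,1]^d`, so above any point `x` the perturbed copy of
the lattice point two levels above `⌊x⌋` lies within ℓ¹ distance `R = 3d`; hence each application
of `h` raises a point by at most `R`. While the two explored points are at different integer
levels only the lower one moves, so their heights never differ by more than `2R + 1`, and a ball
added to the history region reaches at most `R` above its centre. Therefore `H_n` lies in the slab
`r_n ≤ y(d) ≤ r_n + 3R + 1`, and `m_d = 9d + 5` works.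
-/

open MeasureTheory ProbabilityTheory Filter
open scoped ENNReal NNReal

namespace DSF

noncomputable section
open Classical

/-- The index of the last (`d`-th) coordinate. -/
def lastIdx (d : ℕ) [NeZero d] : Fin d :=
  ⟨d - 1, Nat.sub_lt (Nat.pos_of_ne_zero (NeZero.ne d)) Nat.one_pos⟩

/-- ℓ¹ distance on ℝ^d. -/
def dist1 {d : ℕ} (x y : Fin d → ℝ) : ℝ := ∑ i, |x i - y i|

/-- The cube [-1,1]^d. -/
def cube (d : ℕ) : Set (Fin d → ℝ) := Set.univ.pi fun _ => Set.Icc (-1 : ℝ) 1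

/-- Embedding of a lattice point into ℝ^d. -/
def latt {d : ℕ} (w : Fin d → ℤ) : Fin d → ℝ := fun i => (w i : ℝ)

variable {d : ℕ} {Ω : Type*} [MeasurableSpace Ω]

/-- The perturbed lattice point set V(ω). -/
def pts (U : (Fin d → ℤ) → Ω → (Fin d → ℝ)) (ω : Ω) : Set (Fin d → ℝ) :=
  {x | ∃ w : Fin d → ℤ, x = latt w + U w ω}

/-- The model hypotheses: the perturbations are i.i.d. uniform on the cube `[-1,1]^d`. -/
structure IsPerturbedLattice (U : (Fin d → ℤ) → Ω → (Fin d → ℝ)) (μ : Measure Ω) : Prop where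
  meas : ∀ w, Measurable (U w)
  indep : iIndepFun U μ
  unif : ∀ w, pdf.IsUniform (U w) (cube d) μ

/-- `IsNext Vs x y` : `y` is a point of `Vs` with strictly larger last coordinate minimizing
the ℓ¹ distance to `x` among such points. -/
def IsNext [NeZero d] (Vs : Set (Fin d → ℝ)) (x y : Fin d → ℝ) : Prop :=
  y ∈ Vs ∧ x (lastIdx d) < y (lastIdx d) ∧
    ∀ z ∈ Vs, x (lastIdx d) < z (lastIdx d) → dist1 x y ≤ dist1 x z

/-- The next DSF step `h(x)` (an arbitrary minimizer; a.s. well defined and unique). -/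
def nextStep [NeZero d] (Vs : Set (Fin d → ℝ)) (x : Fin d → ℝ) : Fin d → ℝ :=
  if h : ∃ y, IsNext Vs x y then h.choose else x

/-- The upper half ℓ¹ ball `B⁺(x,r)`. -/
def Bplus [NeZero d] (x : Fin d → ℝ) (r : ℝ) : Set (Fin d → ℝ) :=
  {y | dist1 x y ≤ r ∧ x (lastIdx d) ≤ y (lastIdx d)}

/-- The closed upper half-space `H⁺(l)`. -/
def upperHalf (d : ℕ) [NeZero d] (l : ℝ) : Set (Fin d → ℝ) := {y | l ≤ y (lastIdx d)}

/-- The lattice point `x̂` corresponding to a perturbed point `x ∈ V` (a.s. unique). -/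
def hat (U : (Fin d → ℤ) → Ω → (Fin d → ℝ)) (ω : Ω) (x : Fin d → ℝ) : Fin d → ℤ :=
  if h : ∃ w : Fin d → ℤ, x = latt w + U w ω then h.choose else 0

/-- `x↑`: the lattice point closest to `x` in the level `{w : w(d) = ⌊x(d)⌋ + 1}`
(a.s. unique). -/
def upLatt [NeZero d] (x : Fin d → ℝ) : Fin d → ℤ :=
  if h : ∃ w : Fin d → ℤ, (w (lastIdx d) = ⌊x (lastIdx d)⌋ + 1 ∧
      ∀ w' : Fin d → ℤ, w' (lastIdx d) = ⌊x (lastIdx d)⌋ + 1 →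
        dist1 x (latt w) ≤ dist1 x (latt w'))
  then h.choose else 0

/-- One step of the joint exploration process (for `n ≥ 1`). -/
def jointStep [NeZero d] (Vs : Set (Fin d → ℝ)) (p : (Fin d → ℝ) × (Fin d → ℝ)) :
    (Fin d → ℝ) × (Fin d → ℝ) :=
  if ⌊p.1 (lastIdx d)⌋ < ⌊p.2 (lastIdx d)⌋ then (nextStep Vs p.1, p.2)
  else if ⌊p.2 (lastIdx d)⌋ < ⌊p.1 (lastIdx d)⌋ then (p.1, nextStep Vs p.2)
  else if nextStep Vs p.1 = p.2 then (nextStep Vs (nextStep Vs p.1), nextStep Vs p.2)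
  else if nextStep Vs p.2 = p.1 then (nextStep Vs p.1, nextStep Vs (nextStep Vs p.2))
  else (nextStep Vs p.1, nextStep Vs p.2)

/-- The joint exploration process `(g_n(u), g_n(v))`. -/
def jointG [NeZero d] (Vs : Set (Fin d → ℝ)) (u v : Fin d → ℝ) :
    ℕ → (Fin d → ℝ) × (Fin d → ℝ)
  | 0 => (u, v)
  | 1 => (nextStep Vs u, nextStep Vs v)
  | (n+2) => jointStep Vs (jointG Vs u v (n+1))

/-- The history (explored) region `H_n` of the joint exploration process. -/
def histRegion [NeZero d] (Vs : Set (Fin d → ℝ)) (u v : Fin d → ℝ) : ℕ → Set (Fin d → ℝ)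
  | 0 => ∅
  | (n+1) =>
      ((histRegion Vs u v n
        ∪ (if (jointG Vs u v (n+1)).1 = (jointG Vs u v n).1 then ∅
           else Bplus (jointG Vs u v n).1
             (dist1 (jointG Vs u v n).1 (nextStep Vs (jointG Vs u v n).1)))
        ∪ (if (jointG Vs u v (n+1)).2 = (jointG Vs u v n).2 then ∅
           else Bplus (jointG Vs u v n).2
             (dist1 (jointG Vs u v n).2 (nextStep Vs (jointG Vs u v n).2))))
        ∩ upperHalf d (min ((jointG Vs u v (n+1)).1 (lastIdx d))
            ((jointG Vs u v (n+1)).2 (lastIdx d))))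

/-- The height `L(B)` of a set `B ⊆ ℝ^d`. -/
def height [NeZero d] (B : Set (Fin d → ℝ)) : ℝ :=
  sSup {r | ∃ x ∈ B, ∃ y ∈ B, r = x (lastIdx d) - y (lastIdx d)}

/-- The set `Γ_n` of lattice points whose perturbations have been used in the first
`n` steps of the joint exploration process. -/
def gammaSet [NeZero d] (U : (Fin d → ℤ) → Ω → (Fin d → ℝ)) (ω : Ω) (u v : Fin d → ℝ)
    (n : ℕ) : Set (Fin d → ℤ) :=
  {w | ∃ j ≤ n, w = hat U ω (jointG (pts U ω) u v j).1 ∨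
      w = hat U ω (jointG (pts U ω) u v j).2}

/-- The `‖·‖_∞` upper neighbourhood `N(w)` of a lattice point `w`. -/
def nbd [NeZero d] (w : Fin d → ℤ) : Set (Fin d → ℤ) :=
  {y | w (lastIdx d) ≤ y (lastIdx d) ∧ ∀ i, |y i - w i| ≤ 1}

/-- The event `A(w)`: every lattice point of `N(w)` is perturbed into `B⁺(·, δ)`. -/
def eventA [NeZero d] (U : (Fin d → ℤ) → Ω → (Fin d → ℝ)) (δ : ℝ) (w : Fin d → ℤ) :
    Set Ω :=
  {ω | ∀ y ∈ nbd w, latt y + U y ω ∈ Bplus (latt y) δ}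

/-- Step `k` (i.e. the transition from `g_{k-1}` to `g_k`, `k ≥ 1`) of the joint exploration
process is an 'up' step. -/
def UpStepAt [NeZero d] (Vs : Set (Fin d → ℝ)) (u v : Fin d → ℝ) (δ : ℝ) (k : ℕ) : Prop :=
  ⌊(jointG Vs u v (k-1)).1 (lastIdx d)⌋ = ⌊(jointG Vs u v (k-1)).2 (lastIdx d)⌋ ∧
  (jointG Vs u v k).1 ∈ Bplus (latt (upLatt (jointG Vs u v (k-1)).1)) δ ∧
  (jointG Vs u v k).2 ∈ Bplus (latt (upLatt (jointG Vs u v (k-1)).2)) δ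

/-- Step `k` is a 'special up' step. -/
def SpecialUpStepAt [NeZero d] (U : (Fin d → ℤ) → Ω → (Fin d → ℝ)) (ω : Ω)
    (u v : Fin d → ℝ) (δ : ℝ) (k : ℕ) : Prop :=
  UpStepAt (pts U ω) u v δ k ∧
  ω ∈ eventA U δ (upLatt (jointG (pts U ω) u v (k-1)).1) ∧
  ω ∈ eventA U δ (upLatt (jointG (pts U ω) u v (k-1)).2)

/-- The renewal steps `τ_j` of the joint exploration process. -/
def tau [NeZero d] (U : (Fin d → ℤ) → Ω → (Fin d → ℝ)) (δ : ℝ) (md : ℕ)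
    (u v : Fin d → ℝ) (ω : Ω) : ℕ → ℕ
  | 0 => 0
  | (j+1) => sInf {n | tau U δ md u v ω j + md < n ∧
      (∀ k, n - md + 1 ≤ k → k ≤ n → UpStepAt (pts U ω) u v δ k) ∧
      SpecialUpStepAt U ω u v δ n}

/-- The event `E_n = A(g_{n-1}(u)↑) ∩ A(g_{n-1}(v)↑)`. -/
def eventE [NeZero d] (U : (Fin d → ℤ) → Ω → (Fin d → ℝ)) (δ : ℝ) (u v : Fin d → ℝ)
    (n : ℕ) : Set Ω :=
  {ω | ω ∈ eventA U δ (upLatt (jointG (pts U ω) u v (n-1)).1) ∧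
       ω ∈ eventA U δ (upLatt (jointG (pts U ω) u v (n-1)).2)}

/-- The natural filtration `F_n = σ((g_j(u), g_j(v)) : j ≤ n ; Γ_n)`. -/
def filtF [NeZero d] (U : (Fin d → ℤ) → Ω → (Fin d → ℝ)) (u v : Fin d → ℝ) (n : ℕ) :
    MeasurableSpace Ω :=
  (⨆ j ∈ Set.Iic n,
      MeasurableSpace.comap (fun ω => jointG (pts U ω) u v j) inferInstance) ⊔
    MeasurableSpace.comap (fun ω => gammaSet U ω u v n) ⊤

/-- The enlarged filtration
`G_n = σ((g_j(u), g_j(v)) : j ≤ n − 1 ; Γ_n ; 1_{E_1}, …, 1_{E_n})` (with `G_0 = F_0`). -/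
def filtG [NeZero d] (U : (Fin d → ℤ) → Ω → (Fin d → ℝ)) (δ : ℝ) (u v : Fin d → ℝ) :
    ℕ → MeasurableSpace Ω
  | 0 => filtF U u v 0
  | (n+1) =>
      (⨆ j ∈ Set.Iic n,
          MeasurableSpace.comap (fun ω => jointG (pts U ω) u v j) inferInstance) ⊔
      MeasurableSpace.comap (fun ω => gammaSet U ω u v (n+1)) ⊤ ⊔
      (⨆ k ∈ Set.Icc 1 (n+1),
          MeasurableSpace.comap
            (fun ω => (eventE U δ u v k).indicator (fun _ => (1 : ℝ)) ω) inferInstance)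

/-- The σ-field associated with an ℕ-valued random time `τ` and a family `G` of σ-fields
(the stopped σ-field `G_τ` when `τ` is a stopping time for `G`). -/
def stoppedSigma (G : ℕ → MeasurableSpace Ω) (τ : Ω → ℕ) : MeasurableSpace Ω :=
  MeasurableSpace.generateFrom {A | ∀ n, MeasurableSet[G n] (A ∩ {ω | τ ω ≤ n})}

lemma abs_sub_le_dist1 (x y : Fin d → ℝ) (i : Fin d) : |x i - y i| ≤ dist1 x y :=
  Finset.single_le_sum (f := fun j => |x j - y j|) (fun _ _ => abs_nonneg _) (Finset.mem_univ i)

lemma dist1_nonneg (x y : Fin d → ℝ) : 0 ≤ dist1 x y :=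
  Finset.sum_nonneg fun _ _ => abs_nonneg _

def HasStepWithin [NeZero d] (Vs : Set (Fin d → ℝ)) (R : ℝ) : Prop :=
  ∀ x : Fin d → ℝ, ∃ z ∈ Vs, x (lastIdx d) < z (lastIdx d) ∧ dist1 x z ≤ R

section StepBounds

variable [NeZero d] {Vs : Set (Fin d → ℝ)} {R : ℝ}

lemma HasStepWithin.nonneg (hV : HasStepWithin Vs R) : 0 ≤ R := by
  obtain ⟨z, -, -, hz⟩ := hV 0
  exact (dist1_nonneg _ _).trans hz

lemma dist1_nextStep_le (hV : HasStepWithin Vs R) (x : Fin d → ℝ) :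
    dist1 x (nextStep Vs x) ≤ R := by
  by_cases h : ∃ y, IsNext Vs x y
  · rw [nextStep, dif_pos h]
    obtain ⟨z, hz, hxz, hzR⟩ := hV x
    exact (h.choose_spec.2.2 z hz hxz).trans hzR
  · simpa [nextStep, dif_neg h, dist1] using hV.nonneg

lemma last_le_nextStep_last (Vs : Set (Fin d → ℝ)) (x : Fin d → ℝ) :
    x (lastIdx d) ≤ nextStep Vs x (lastIdx d) := by
  by_cases h : ∃ y, IsNext Vs x y
  · rw [nextStep, dif_pos h]
    exact h.choose_spec.2.1.le
  · rw [nextStep, dif_neg h]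

lemma nextStep_last_le (hV : HasStepWithin Vs R) (x : Fin d → ℝ) :
    nextStep Vs x (lastIdx d) ≤ x (lastIdx d) + R := by
  have h := (abs_sub_le_dist1 x (nextStep Vs x) (lastIdx d)).trans (dist1_nextStep_le hV x)
  linarith [neg_abs_le (x (lastIdx d) - nextStep Vs x (lastIdx d))]

lemma last_le_of_mem_Bplus {x y : Fin d → ℝ} {r : ℝ} (hy : y ∈ Bplus x r) :
    y (lastIdx d) ≤ x (lastIdx d) + r := by
  linarith [abs_sub_le_dist1 x y (lastIdx d), neg_abs_le (x (lastIdx d) - y (lastIdx d)), hy.1]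

end StepBounds

section JointProcess

variable [NeZero d] {Vs : Set (Fin d → ℝ)} {R : ℝ}

/-- The level `r_n` of the joint exploration process. -/
def minLevel (Vs : Set (Fin d → ℝ)) (u v : Fin d → ℝ) (n : ℕ) : ℝ :=
  min ((jointG Vs u v n).1 (lastIdx d)) ((jointG Vs u v n).2 (lastIdx d))

lemma jointStep_last_bounds (hV : HasStepWithin Vs R) (p : (Fin d → ℝ) × (Fin d → ℝ)) :
    (p.1 (lastIdx d) ≤ (jointStep Vs p).1 (lastIdx d) ∧
      (jointStep Vs p).1 (lastIdx d) ≤ p.1 (lastIdx d) + 2 * R) ∧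
    (p.2 (lastIdx d) ≤ (jointStep Vs p).2 (lastIdx d) ∧
      (jointStep Vs p).2 (lastIdx d) ≤ p.2 (lastIdx d) + 2 * R) := by
  have := hV.nonneg
  have := last_le_nextStep_last Vs p.1
  have := last_le_nextStep_last Vs p.2
  have := last_le_nextStep_last Vs (nextStep Vs p.1)
  have := last_le_nextStep_last Vs (nextStep Vs p.2)
  have := nextStep_last_le hV p.1
  have := nextStep_last_le hV p.2
  have := nextStep_last_le hV (nextStep Vs p.1)
  have := nextStep_last_le hV (nextStep Vs p.2)
  unfold jointStep
  split_ifs <;> refine ⟨⟨?_, ?_⟩, ?_, ?_⟩ <;> dsimp only <;> linarith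

lemma jointG_last_bounds (hV : HasStepWithin Vs R) (u v : Fin d → ℝ) (n : ℕ) :
    ((jointG Vs u v n).1 (lastIdx d) ≤ (jointG Vs u v (n + 1)).1 (lastIdx d) ∧
      (jointG Vs u v (n + 1)).1 (lastIdx d) ≤ (jointG Vs u v n).1 (lastIdx d) + 2 * R) ∧
    ((jointG Vs u v n).2 (lastIdx d) ≤ (jointG Vs u v (n + 1)).2 (lastIdx d) ∧
      (jointG Vs u v (n + 1)).2 (lastIdx d) ≤ (jointG Vs u v n).2 (lastIdx d) + 2 * R) := by
  cases n with
  | zero =>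
    have := hV.nonneg
    have := nextStep_last_le hV u
    have := nextStep_last_le hV v
    exact ⟨⟨last_le_nextStep_last Vs u, by simp only [jointG]; linarith⟩,
      last_le_nextStep_last Vs v, by simp only [jointG]; linarith⟩
  | succ n => exact jointStep_last_bounds hV (jointG Vs u v (n + 1))

/-- The process moves only the lower point while the two points are at different integer
levels, so their last coordinates stay within `2R + 1` of each other. -/
lemma abs_jointStep_last_sub_le (hV : HasStepWithin Vs R) (p : (Fin d → ℝ) × (Fin d → ℝ))
    (hp : |p.1 (lastIdx d) - p.2 (lastIdx d)| ≤ 2 * R + 1) :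
    |(jointStep Vs p).1 (lastIdx d) - (jointStep Vs p).2 (lastIdx d)| ≤ 2 * R + 1 := by
  obtain ⟨⟨h₁, h₁'⟩, h₂, h₂'⟩ := jointStep_last_bounds hV p
  have := hV.nonneg
  have := nextStep_last_le hV p.1
  have := nextStep_last_le hV p.2
  rw [abs_le] at hp ⊢
  unfold jointStep at h₁ h₁' h₂ h₂' ⊢
  split_ifs at h₁ h₁' h₂ h₂' ⊢ with hlt hgt
  · have := Int.floor_mono.reflect_lt hlt
    constructor <;> dsimp only at * <;> linarith
  · have := Int.floor_mono.reflect_lt hgt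
    constructor <;> dsimp only at * <;> linarith
  all_goals
    have := abs_lt.1 (Int.abs_sub_lt_one_of_floor_eq_floor
      (le_antisymm (not_lt.1 hgt) (not_lt.1 hlt)))
    constructor <;> linarith

lemma abs_jointG_last_sub_le (hV : HasStepWithin Vs R) {u v : Fin d → ℝ}
    (huv : u (lastIdx d) = v (lastIdx d)) (n : ℕ) :
    |(jointG Vs u v n).1 (lastIdx d) - (jointG Vs u v n).2 (lastIdx d)| ≤ 2 * R + 1 := by
  have := hV.nonneg
  induction n with
  | zero => simp only [jointG, huv, sub_self, abs_zero]; linarith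
  | succ n ih =>
    cases n with
    | zero =>
      have := nextStep_last_le hV u
      have := nextStep_last_le hV v
      have := last_le_nextStep_last Vs u
      have := last_le_nextStep_last Vs v
      simp only [jointG]
      rw [abs_le]; constructor <;> linarith
    | succ n => exact abs_jointStep_last_sub_le hV _ ih

lemma jointG_last_le_minLevel_add (hV : HasStepWithin Vs R) {u v : Fin d → ℝ}
    (huv : u (lastIdx d) = v (lastIdx d)) (n : ℕ) :
    (jointG Vs u v n).1 (lastIdx d) ≤ minLevel Vs u v n + (2 * R + 1) ∧
      (jointG Vs u v n).2 (lastIdx d) ≤ minLevel Vs u v n + (2 * R + 1) := by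
  have h := abs_jointG_last_sub_le hV huv n
  set a := (jointG Vs u v n).1 (lastIdx d)
  set b := (jointG Vs u v n).2 (lastIdx d)
  rw [← max_sub_min_eq_abs'] at h
  constructor <;> unfold minLevel <;> linarith [le_max_left a b, le_max_right a b]

lemma minLevel_le_succ (hV : HasStepWithin Vs R) (u v : Fin d → ℝ) (n : ℕ) :
    minLevel Vs u v n ≤ minLevel Vs u v (n + 1) :=
  have h := jointG_last_bounds hV u v n
  min_le_min h.1.1 h.2.1

lemma last_le_of_mem_ite_Bplus {c : Prop} [Decidable c] {x y : Fin d → ℝ} {r : ℝ}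
    (hy : y ∈ if c then (∅ : Set (Fin d → ℝ)) else Bplus x r) :
    y (lastIdx d) ≤ x (lastIdx d) + r := by
  split_ifs at hy
  · exact absurd hy (Set.notMem_empty y)
  · exact last_le_of_mem_Bplus hy

lemma last_mem_Icc_of_mem_histRegion (hV : HasStepWithin Vs R) {u v : Fin d → ℝ}
    (huv : u (lastIdx d) = v (lastIdx d)) {n : ℕ} {y : Fin d → ℝ}
    (hy : y ∈ histRegion Vs u v n) :
    y (lastIdx d) ∈ Set.Icc (minLevel Vs u v n) (minLevel Vs u v n + (3 * R + 1)) := by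
  induction n generalizing y with
  | zero => exact absurd hy (Set.notMem_empty y)
  | succ n ih =>
    obtain ⟨(hy | hy) | hy, hyH⟩ := hy
    all_goals refine ⟨hyH, ?_⟩
    · linarith [(ih hy).2, minLevel_le_succ hV u v n]
    · have := (jointG_last_bounds hV u v n).1.1
      have := (jointG_last_le_minLevel_add hV huv (n + 1)).1
      linarith [last_le_of_mem_ite_Bplus hy, dist1_nextStep_le hV (jointG Vs u v n).1]
    · have := (jointG_last_bounds hV u v n).2.1
      have := (jointG_last_le_minLevel_add hV huv (n + 1)).2
      linarith [last_le_of_mem_ite_Bplus hy, dist1_nextStep_le hV (jointG Vs u v n).2]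

end JointProcess

lemma height_le_of_forall_last_mem_Icc [NeZero d] {B : Set (Fin d → ℝ)} {l c : ℝ} (hc : 0 ≤ c)
    (hB : ∀ y ∈ B, y (lastIdx d) ∈ Set.Icc l (l + c)) : height B ≤ c := by
  refine Real.sSup_le ?_ hc
  rintro r ⟨x, hx, y, hy, rfl⟩
  linarith [(hB x hx).2, (hB y hy).1]

lemma height_histRegion_le [NeZero d] {Vs : Set (Fin d → ℝ)} {R : ℝ}
    (hV : HasStepWithin Vs R) {u v : Fin d → ℝ} (huv : u (lastIdx d) = v (lastIdx d)) (n : ℕ) :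
    height (histRegion Vs u v n) ≤ 3 * R + 1 :=
  height_le_of_forall_last_mem_Icc (by linarith [hV.nonneg])
    fun _ hy => last_mem_Icc_of_mem_histRegion hV huv hy

lemma abs_sub_floor_add_le {x t : ℝ} {k : ℤ} (hk : k ∈ Set.Icc 0 2) (ht : t ∈ Set.Icc (-1) 1) :
    |x - (⌊x⌋ + k + t)| ≤ 3 := by
  have : (0 : ℝ) ≤ k ∧ (k : ℝ) ≤ 2 := by exact_mod_cast hk
  rw [abs_le]
  constructor <;> linarith [Int.floor_le x, Int.lt_floor_add_one x, ht.1, ht.2]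

/-- The witness above `x` is the perturbation of the lattice point two levels above `⌊x⌋`. -/
lemma hasStepWithin_of_forall_mem_cube [NeZero d] {P : (Fin d → ℤ) → (Fin d → ℝ)}
    (hP : ∀ w, P w ∈ cube d) : HasStepWithin {x | ∃ w, x = latt w + P w} (3 * d) := by
  intro x
  set w : Fin d → ℤ := fun i => ⌊x i⌋ + if i = lastIdx d then 2 else 0
  have hw : ∀ i, (latt w + P w) i = ⌊x i⌋ + ((if i = lastIdx d then 2 else 0 : ℤ) : ℝ) + P w i :=
    fun i => by simp [w, latt]
  have hPw : ∀ i, P w i ∈ Set.Icc (-1) 1 := fun i => hP w i (Set.mem_univ i)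
  refine ⟨latt w + P w, ⟨w, rfl⟩, ?_, ?_⟩
  · rw [hw, if_pos rfl]
    push_cast
    linarith [Int.lt_floor_add_one (x (lastIdx d)), (hPw (lastIdx d)).1]
  · calc dist1 x (latt w + P w) = ∑ i, |x i - (latt w + P w) i| := rfl
      _ ≤ ∑ _i : Fin d, (3 : ℝ) :=
        Finset.sum_le_sum fun i _ => hw i ▸ abs_sub_floor_add_le (by split_ifs <;> simp) (hPw i)
      _ = 3 * d := by simp [mul_comm]

lemma IsPerturbedLattice.ae_forall_mem_cube {U : (Fin d → ℤ) → Ω → (Fin d → ℝ)} {μ : Measure Ω}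
    (hU : IsPerturbedLattice U μ) : ∀ᵐ ω ∂μ, ∀ w, U w ω ∈ cube d := by
  refine ae_all_iff.2 fun w => ae_of_ae_map (hU.meas w).aemeasurable ?_
  rw [hU.unif w]
  exact ae_cond_mem (MeasurableSet.univ_pi fun _ => measurableSet_Icc)

theorem history_height_uniformly_bounded_general
    [NeZero d] (μ : Measure Ω)
    (U : (Fin d → ℤ) → Ω → (Fin d → ℝ)) (hU : IsPerturbedLattice U μ) :
    ∃ md : ℕ, ∀ u v : Fin d → ℤ, u (lastIdx d) = v (lastIdx d) →
      ∀ᵐ ω ∂μ, ∀ n : ℕ,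
        height (histRegion (pts U ω) (latt u) (latt v) n) ≤ (md : ℝ) - 4 := by
  refine ⟨9 * d + 5, fun u v huv => ?_⟩
  filter_upwards [hU.ae_forall_mem_cube] with ω hω n
  have huv' : latt u (lastIdx d) = latt v (lastIdx d) := by simp [latt, huv]
  have := height_histRegion_le (Vs := pts U ω) (hasStepWithin_of_forall_mem_cube hω) huv' n
  push_cast
  linarith

/-- Lemma 3.2: there is an integer `m_d`, depending only on `d`, such that for
the joint exploration process started from any two lattice points at the same level, the
height of the history region satisfies `L(H_n) ≤ m_d − 4` for all `n`, almost surely. -/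
theorem history_height_uniformly_bounded
    [NeZero d] (hd : d = 2 ∨ d = 3)
    (μ : Measure Ω) [IsProbabilityMeasure μ]
    (U : (Fin d → ℤ) → Ω → (Fin d → ℝ)) (hU : IsPerturbedLattice U μ) :
    ∃ md : ℕ, ∀ u v : Fin d → ℤ, u (lastIdx d) = v (lastIdx d) →
      ∀ᵐ ω ∂μ, ∀ n : ℕ,
        height (histRegion (pts U ω) (latt u) (latt v) n) ≤ (md : ℝ) - 4 :=
  history_height_uniformly_bounded_general μ U hU

end

end DSF
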